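/- Let j ∈ ℕ, N = 2j+1, and t : M³ → ℂ, with φ its discrete Fourier presentation. Then Σ_{a,b,c=0}^{N−1} φ_{abc}² = N³·Σ_{(m₁,m₂,m₃)∈M³} (−1)^{3j−|m₁|−|m₂|−|m₃|}·t(m₁,m₂,m₃)·t(−m₁,−m₂,−m₃). -/

import Mathlib

/-!
Expanding the square writes `Σ_{abc} φ_{abc}²` as a double sum over `m, m' ∈ M³` of the
coefficients `t(m) i^{…} · t(m') i^{…}` times the product of three character sums
`Σ_{a<N} e^{-2πi a (mₖ + m'ₖ)/N}`, each equal to `N` if `N ∣ mₖ + m'ₖ` and `0` otherwise.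
Because `M` is a window of `N` consecutive integers centred at `0`, the divisibility forces
`m' = -m`, and the surviving phases combine as `i^k · i^k = (-1)^k` since `|-m| = |m|`.
-/

open Finset

/-- The discrete Fourier presentation of `t : M³ → ℂ`, where `M = {-j, …, j}`:
`φ_{abc} = Σ_{m∈M³} t(m₁,m₂,m₃) i^{3j-|m₁|-|m₂|-|m₃|} exp(-(2πi/N)(a m₁ + b m₂ + c m₃))`. -/
noncomputable def fourierPresentation (j N : ℕ) (t : ℤ → ℤ → ℤ → ℂ) :
    ℤ → ℤ → ℤ → ℂ :=
  fun a b c =>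
    ∑ m1 ∈ Finset.Icc (-(j : ℤ)) (j : ℤ), ∑ m2 ∈ Finset.Icc (-(j : ℤ)) (j : ℤ),
      ∑ m3 ∈ Finset.Icc (-(j : ℤ)) (j : ℤ),
        t m1 m2 m3 * Complex.I ^ (3 * (j : ℤ) - |m1| - |m2| - |m3|) *
          Complex.exp (-(2 * (Real.pi : ℂ) * Complex.I / (N : ℂ)) *
            ((a : ℂ) * (m1 : ℂ) + (b : ℂ) * (m2 : ℂ) + (c : ℂ) * (m3 : ℂ)))

open Complex

section KernelOrthogonality

variable {R α β ι κ : Type*} [CommSemiring R] [Fintype α] [Fintype β]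
  [DecidableEq ι] [DecidableEq κ]

/-- Orthogonality for the bilinear pairing (no complex conjugation), so `x` is paired with `σ x`
rather than with itself. -/
def KernelOrthogonalOn (K : α → ι → R) (s : Finset ι) (σ : ι → ι) (c : R) : Prop :=
  ∀ x ∈ s, ∀ y ∈ s, ∑ a, K a x * K a y = if y = σ x then c else 0

theorem KernelOrthogonalOn.prod {K : α → ι → R} {L : β → κ → R} {s : Finset ι} {t : Finset κ}
    {σ : ι → ι} {τ : κ → κ} {c d : R}
    (hK : KernelOrthogonalOn K s σ c) (hL : KernelOrthogonalOn L t τ d) :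
    KernelOrthogonalOn (fun (a : α × β) (x : ι × κ) => K a.1 x.1 * L a.2 x.2) (s ×ˢ t)
      (Prod.map σ τ) (c * d) := by
  rintro ⟨x₁, x₂⟩ hx ⟨y₁, y₂⟩ hy
  rw [mem_product] at hx hy
  calc ∑ a : α × β, K a.1 x₁ * L a.2 x₂ * (K a.1 y₁ * L a.2 y₂)
      = (∑ a, K a x₁ * K a y₁) * ∑ b, L b x₂ * L b y₂ := by
        rw [Fintype.sum_prod_type, sum_mul_sum]
        exact sum_congr rfl fun a _ => sum_congr rfl fun b _ => by ring
    _ = _ := by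
        rw [hK _ hx.1 _ hy.1, hL _ hx.2 _ hy.2, ite_zero_mul_ite_zero]
        simp only [Prod.map_apply, Prod.mk.injEq]

theorem KernelOrthogonalOn.sum_sq_sum_mul {K : α → ι → R} {s : Finset ι} {σ : ι → ι} {c : R}
    (hK : KernelOrthogonalOn K s σ c) (hσ : ∀ x ∈ s, σ x ∈ s) (F : ι → R) :
    ∑ a, (∑ x ∈ s, F x * K a x) ^ 2 = c * ∑ x ∈ s, F x * F (σ x) := by
  calc ∑ a, (∑ x ∈ s, F x * K a x) ^ 2
      = ∑ x ∈ s, ∑ y ∈ s, F x * F y * ∑ a, K a x * K a y := by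
        simp_rw [sq, sum_mul_sum, mul_sum]
        rw [sum_comm]
        refine sum_congr rfl fun x _ => ?_
        rw [sum_comm]
        exact sum_congr rfl fun y _ => sum_congr rfl fun a _ => by ring
    _ = ∑ x ∈ s, c * (F x * F (σ x)) := by
        refine sum_congr rfl fun x hx => ?_
        rw [sum_congr rfl fun y hy => by rw [hK x hx y hy, mul_ite, mul_zero], sum_ite_eq',
          if_pos (hσ x hx), mul_comm]
    _ = _ := (mul_sum _ _ _).symm

end KernelOrthogonality

theorem IsPrimitiveRoot.sum_range_zpow_pow {K : Type*} [Field K] {ζ : K} {n : ℕ}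
    (hζ : IsPrimitiveRoot ζ n) (k : ℤ) :
    ∑ i ∈ range n, (ζ ^ k) ^ i = if (n : ℤ) ∣ k then (n : K) else 0 := by
  split_ifs with hk
  · simp [(hζ.zpow_eq_one_iff_dvd k).2 hk]
  · rw [geom_sum_eq ((hζ.zpow_eq_one_iff_dvd k).not.2 hk), ← zpow_natCast, ← zpow_mul,
      mul_comm, zpow_mul, zpow_natCast, hζ.pow_eq_one, one_zpow, sub_self, zero_div]

theorem Int.dvd_add_iff_eq_neg_of_mem_Icc {j m m' : ℤ} (hm : m ∈ Icc (-j) j)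
    (hm' : m' ∈ Icc (-j) j) : 2 * j + 1 ∣ m + m' ↔ m' = -m := by
  rw [mem_Icc] at hm hm'
  constructor
  · intro h
    have := Int.eq_zero_of_abs_lt_dvd h (by rw [abs_lt]; omega)
    omega
  · rintro rfl
    simp

noncomputable def fourierChar (N : ℕ) (a : Fin N) (m : ℤ) : ℂ :=
  exp (-(2 * Real.pi * I / N) * ((a : ℕ) * m))

theorem sum_fourierChar_mul {N : ℕ} (hN : N ≠ 0) (m m' : ℤ) :
    ∑ a, fourierChar N a m * fourierChar N a m' = if (N : ℤ) ∣ m + m' then (N : ℂ) else 0 := by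
  have hζ : IsPrimitiveRoot (exp (-(2 * Real.pi * I / N))) N := by
    rw [exp_neg]
    exact (isPrimitiveRoot_exp N hN).inv
  rw [← hζ.sum_range_zpow_pow, ← Fin.sum_univ_eq_sum_range]
  refine sum_congr rfl fun a _ => ?_
  rw [fourierChar, fourierChar, ← exp_add, ← exp_int_mul, ← exp_nat_mul]
  push_cast
  ring_nf

theorem kernelOrthogonalOn_fourierChar (j : ℕ) :
    KernelOrthogonalOn (fourierChar (2 * j + 1)) (Icc (-(j : ℤ)) j) Neg.neg
      ((2 * j + 1 : ℕ) : ℂ) := by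
  intro m hm m' hm'
  rw [sum_fourierChar_mul (by omega)]
  push_cast
  simp only [Int.dvd_add_iff_eq_neg_of_mem_Icc hm hm']

noncomputable def fourierChar3 (N : ℕ) (a : Fin N × Fin N × Fin N) (m : ℤ × ℤ × ℤ) : ℂ :=
  fourierChar N a.1 m.1 * (fourierChar N a.2.1 m.2.1 * fourierChar N a.2.2 m.2.2)

theorem kernelOrthogonalOn_fourierChar3 (j : ℕ) :
    KernelOrthogonalOn (fourierChar3 (2 * j + 1))
      (Icc (-(j : ℤ)) j ×ˢ Icc (-(j : ℤ)) j ×ˢ Icc (-(j : ℤ)) j) Neg.neg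
      (((2 * j + 1 : ℕ) : ℂ) ^ 3) := by
  rw [pow_three]
  exact (kernelOrthogonalOn_fourierChar j).prod
    ((kernelOrthogonalOn_fourierChar j).prod (kernelOrthogonalOn_fourierChar j))

noncomputable def phasedTensor (j : ℕ) (t : ℤ → ℤ → ℤ → ℂ) (m : ℤ × ℤ × ℤ) : ℂ :=
  t m.1 m.2.1 m.2.2 * I ^ (3 * (j : ℤ) - |m.1| - |m.2.1| - |m.2.2|)

theorem fourierPresentation_eq_sum_product (j N : ℕ) (t : ℤ → ℤ → ℤ → ℂ) (a b c : Fin N) :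
    fourierPresentation j N t a b c =
      ∑ m ∈ Icc (-(j : ℤ)) j ×ˢ Icc (-(j : ℤ)) j ×ˢ Icc (-(j : ℤ)) j,
        phasedTensor j t m * fourierChar3 N (a, b, c) m := by
  simp only [fourierPresentation, sum_product]
  refine sum_congr rfl fun m1 _ => sum_congr rfl fun m2 _ => sum_congr rfl fun m3 _ => ?_
  rw [phasedTensor, fourierChar3, fourierChar, fourierChar, fourierChar, ← exp_add, ← exp_add]
  push_cast
  ring_nf

theorem phasedTensor_mul_neg (j : ℕ) (t : ℤ → ℤ → ℤ → ℂ) (m : ℤ × ℤ × ℤ) :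
    phasedTensor j t m * phasedTensor j t (-m) =
      (-1) ^ (3 * (j : ℤ) - |m.1| - |m.2.1| - |m.2.2|) *
        (t m.1 m.2.1 m.2.2 * t (-m.1) (-m.2.1) (-m.2.2)) := by
  simp only [phasedTensor, Prod.fst_neg, Prod.snd_neg, abs_neg]
  rw [← I_mul_I, mul_zpow]
  ring

/-- The quadratic invariant in direct space equals `N³` times the contraction of `t` with
itself through the invariant metric `g_{mm'} = (-1)^{j-m} δ_{m,-m'}`. -/
theorem quadratic_invariant_fourier (j N : ℕ) (hN : N = 2 * j + 1)
    (t : ℤ → ℤ → ℤ → ℂ)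
    (φ : ℤ → ℤ → ℤ → ℂ) (hφ : φ = fourierPresentation j N t) :
    ∑ a : Fin N, ∑ b : Fin N, ∑ c : Fin N,
        (φ ((a : ℕ) : ℤ) ((b : ℕ) : ℤ) ((c : ℕ) : ℤ)) ^ 2
      = (N : ℂ) ^ 3 *
          ∑ m1 ∈ Finset.Icc (-(j : ℤ)) (j : ℤ), ∑ m2 ∈ Finset.Icc (-(j : ℤ)) (j : ℤ),
            ∑ m3 ∈ Finset.Icc (-(j : ℤ)) (j : ℤ),
              (-1 : ℂ) ^ (3 * (j : ℤ) - |m1| - |m2| - |m3|) *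
                (t m1 m2 m3 * t (-m1) (-m2) (-m3)) := by
  subst hφ hN
  set M := Icc (-(j : ℤ)) j
  have hneg : ∀ m ∈ M ×ˢ M ×ˢ M, -m ∈ M ×ˢ M ×ˢ M := by
    simp only [M, mem_product, mem_Icc, Prod.fst_neg, Prod.snd_neg]
    omega
  calc _ = ∑ a : Fin (2 * j + 1) × Fin (2 * j + 1) × Fin (2 * j + 1),
        (∑ m ∈ M ×ˢ M ×ˢ M, phasedTensor j t m * fourierChar3 (2 * j + 1) a m) ^ 2 := by
        simp only [Fintype.sum_prod_type, fourierPresentation_eq_sum_product]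
        rfl
    _ = _ := by
        rw [(kernelOrthogonalOn_fourierChar3 j).sum_sq_sum_mul hneg, sum_product]
        simp only [sum_product, phasedTensor_mul_neg]
        rfl
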